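/- Let M be a Hilbert module over an algebra A such that every module multiplication operator M_φ is essentially normal, and let 0 ← M₀ ← M₁ ← M₂ ← 0 be a short exact sequence of Hilbert modules where M₁ = M, the map M₂ → M₁ is an isometric module map onto a submodule N, and M₀ ≅ M₁/N. Then M₂ is essentially reductive if and only if M₀ is essentially reductive. -/

import Mathlib

/-!
Write `T = ρ a` and `P` for the projection onto `N`. Invariance of `N` means `(1 - P) T P = 0`,
so `T = A + B + C` with `A = P T P`, `B = P T (1 - P)`, `C = (1 - P) T (1 - P)`, and compressing
the self-commutator gives
  `P [T*, T] P = [A*, A] - B B*`  and  `(1 - P) [T*, T] (1 - P) = B* B + [C*, C]`.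
Both left sides are compact, so `[A*, A]` is compact iff `B B*` is, iff `B* B` is (each holds iff
`B` is compact), iff `[C*, C]` is. The isometry `X₁` is a unitary from `M₂` onto `N` carrying
`ρ₂ a` to `A`, so `M₂` is essentially reductive iff every `A` is essentially normal.
-/

open ContinuousLinearMap

theorem TotallyBounded.image_of_dist_sq_le {α β γ : Type*} [PseudoMetricSpace β]
    [PseudoMetricSpace γ] {f : α → β} {g : α → γ} {s : Set α} (hg : TotallyBounded (g '' s))
    {C : ℝ} (hfg : ∀ x ∈ s, ∀ y ∈ s, dist (f x) (f y) ^ 2 ≤ C * dist (g x) (g y)) :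
    TotallyBounded (f '' s) := by
  rw [Metric.totallyBounded_iff]
  intro ε hε
  obtain ⟨t, hts, htfin, hcover⟩ := Set.exists_subset_image_finite_and.mp
    (Metric.finite_approx_of_totallyBounded hg (ε ^ 2 / (|C| + 1)) (by positivity))
  refine ⟨f '' t, htfin.image f, ?_⟩
  rintro _ ⟨x, hx, rfl⟩
  obtain ⟨y, hy, hxy⟩ : ∃ y ∈ t, dist (g x) (g y) < ε ^ 2 / (|C| + 1) := by
    simpa using hcover (Set.mem_image_of_mem g hx)
  simp only [Set.mem_iUnion, Metric.mem_ball]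
  refine ⟨f y, Set.mem_image_of_mem f hy, ?_⟩
  have hCd : C * dist (g x) (g y) < ε ^ 2 := by
    rw [lt_div_iff₀ (by positivity)] at hxy
    nlinarith [le_abs_self C, abs_nonneg C, dist_nonneg (x := g x) (y := g y)]
  exact (abs_lt_of_sq_lt_sq' ((hfg x hx y (hts hy)).trans_lt hCd) hε.le).2

section CompactOperator

variable {M₁ M₂ : Type*} [AddCommMonoid M₁] [TopologicalSpace M₁] [AddCommGroup M₂]
  [TopologicalSpace M₂] [IsTopologicalAddGroup M₂] {f g : M₁ → M₂}

theorem IsCompactOperator.iff_of_sub (h : IsCompactOperator (f - g)) :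
    IsCompactOperator f ↔ IsCompactOperator g :=
  ⟨fun hf ↦ by simpa using hf.sub h, fun hg ↦ by simpa using h.add hg⟩

theorem IsCompactOperator.iff_of_add (h : IsCompactOperator (f + g)) :
    IsCompactOperator f ↔ IsCompactOperator g :=
  ⟨fun hf ↦ by simpa using h.sub hf, fun hg ↦ by simpa using h.sub hg⟩

end CompactOperator

section Adjoint

variable {𝕜 E F : Type*} [RCLike 𝕜] [NormedAddCommGroup E] [InnerProductSpace 𝕜 E]
  [CompleteSpace E] [NormedAddCommGroup F] [InnerProductSpace 𝕜 F] [CompleteSpace F]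

theorem IsCompactOperator.of_adjoint_comp_self {S : E →L[𝕜] F}
    (h : IsCompactOperator (adjoint S ∘L S)) : IsCompactOperator S := by
  change IsCompactOperator (S : E →ₗ[𝕜] F)
  rw [isCompactOperator_iff_isCompact_closure_image_closedBall _ one_pos]
  refine TotallyBounded.isCompact_of_isClosed ?_ isClosed_closure
  refine TotallyBounded.closure (TotallyBounded.image_of_dist_sq_le (C := 2)
    ((h.isCompact_closure_image_closedBall 1).totallyBounded.subset subset_closure) ?_)
  intro x hx y hy
  have hxy : ‖x - y‖ ≤ 2 := by
    rw [mem_closedBall_zero_iff] at hx hy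
    linarith [norm_sub_le x y]
  calc dist (S x) (S y) ^ 2 = RCLike.re (inner 𝕜 ((adjoint S ∘L S) (x - y)) (x - y)) := by
        rw [dist_eq_norm, ← map_sub, apply_norm_sq_eq_inner_adjoint_left]
    _ ≤ ‖(adjoint S ∘L S) (x - y)‖ * ‖x - y‖ := re_inner_le_norm _ _
    _ ≤ 2 * dist ((adjoint S ∘L S) x) ((adjoint S ∘L S) y) := by
        rw [map_sub, ← dist_eq_norm, mul_comm]
        exact mul_le_mul_of_nonneg_right hxy dist_nonneg

theorem isCompactOperator_comp_adjoint_iff (S : E →L[𝕜] F) :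
    IsCompactOperator (S ∘L adjoint S) ↔ IsCompactOperator (adjoint S ∘L S) := by
  refine ⟨fun h ↦ ?_, fun h ↦ (IsCompactOperator.of_adjoint_comp_self h).comp_clm _⟩
  have hS' : IsCompactOperator (adjoint S) :=
    .of_adjoint_comp_self (by rwa [adjoint_adjoint])
  exact hS'.comp_clm S

end Adjoint

def selfCommutator {R : Type*} [Ring R] [Star R] (x : R) : R := star x * x - x * star x

section StarRing

variable {R : Type*} [Ring R] [StarRing R]

theorem selfCommutator_sub_mul_star_add {x y : R} (h : x * star y = 0) :
    star x * x - (x + y) * star (x + y) = selfCommutator x - y * star y := by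
  have h' : y * star x = 0 := by simpa using congrArg star h
  simp only [selfCommutator, star_add, add_mul, mul_add, h, h']
  abel

theorem star_add_mul_add_sub_selfCommutator {y z : R} (h : star y * z = 0) :
    star (y + z) * (y + z) - z * star z = star y * y + selfCommutator z := by
  have h' : star z * y = 0 := by simpa using congrArg star h
  simp only [selfCommutator, star_add, add_mul, mul_add, h, h']
  abel

namespace IsStarProjection

variable {p T : R}

theorem mul_selfCommutator_mul (hp : IsStarProjection p) (hT : (1 - p) * T * p = 0) :
    p * selfCommutator T * p =
      selfCommutator (p * T * p) - p * T * (1 - p) * star (p * T * (1 - p)) := by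
  have hTp : T * p = p * T * p := by rw [← sub_eq_zero, ← hT]; noncomm_ring
  have hpT : p * T = p * T * p + p * T * (1 - p) := by noncomm_ring
  have hcross : p * T * p * star (p * T * (1 - p)) = 0 := by
    simp only [star_mul, star_sub, star_one, hp.isSelfAdjoint.star_eq]
    rw [show p * T * p * ((1 - p) * (star T * p)) = p * T * (p * (1 - p)) * star T * p by
      noncomm_ring, hp.mul_one_sub_self]
    noncomm_ring
  calc p * selfCommutator T * p = star (T * p) * (T * p) - p * T * star (p * T) := by
        simp only [selfCommutator, star_mul, hp.isSelfAdjoint.star_eq]; noncomm_ring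
    _ = star (p * T * p) * (p * T * p) -
          (p * T * p + p * T * (1 - p)) * star (p * T * p + p * T * (1 - p)) := by
        rw [← hpT, ← hTp]
    _ = _ := selfCommutator_sub_mul_star_add hcross

theorem one_sub_mul_selfCommutator_mul (hp : IsStarProjection p) (hT : (1 - p) * T * p = 0) :
    (1 - p) * selfCommutator T * (1 - p) =
      star (p * T * (1 - p)) * (p * T * (1 - p)) + selfCommutator ((1 - p) * T * (1 - p)) := by
  have hqT : (1 - p) * T = (1 - p) * T * (1 - p) := by rw [← sub_eq_zero, ← hT]; noncomm_ring
  have hTq : T * (1 - p) = p * T * (1 - p) + (1 - p) * T * (1 - p) := by noncomm_ring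
  have hcross : star (p * T * (1 - p)) * ((1 - p) * T * (1 - p)) = 0 := by
    simp only [star_mul, star_sub, star_one, hp.isSelfAdjoint.star_eq]
    rw [show (1 - p) * (star T * p) * ((1 - p) * T * (1 - p))
        = (1 - p) * star T * (p * (1 - p)) * T * (1 - p) by noncomm_ring, hp.mul_one_sub_self]
    noncomm_ring
  calc (1 - p) * selfCommutator T * (1 - p)
        = star (T * (1 - p)) * (T * (1 - p)) - (1 - p) * T * star ((1 - p) * T) := by
        simp only [selfCommutator, star_mul, star_sub, star_one, hp.isSelfAdjoint.star_eq]
        noncomm_ring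
    _ = star (p * T * (1 - p) + (1 - p) * T * (1 - p)) * (p * T * (1 - p) + (1 - p) * T * (1 - p))
          - (1 - p) * T * (1 - p) * star ((1 - p) * T * (1 - p)) := by
        rw [← hTq, ← hqT]
    _ = _ := star_add_mul_add_sub_selfCommutator hcross

end IsStarProjection

end StarRing

section EssentiallyNormal

variable {𝕜 E F : Type*} [RCLike 𝕜] [NormedAddCommGroup E] [InnerProductSpace 𝕜 E]
  [CompleteSpace E] [NormedAddCommGroup F] [InnerProductSpace 𝕜 F] [CompleteSpace F]

def IsEssentiallyNormal (T : E →L[𝕜] E) : Prop := IsCompactOperator ⇑(selfCommutator T)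

theorem isEssentiallyNormal_iff {T : E →L[𝕜] E} :
    IsEssentiallyNormal T ↔ IsCompactOperator ⇑(adjoint T ∘L T - T ∘L adjoint T) :=
  Iff.rfl

theorem IsEssentiallyNormal.compress_iff {P T : E →L[𝕜] E} (hT : IsEssentiallyNormal T)
    (hP : IsStarProjection P) (hinv : (1 - P) * T * P = 0) :
    IsEssentiallyNormal (P * T * P) ↔ IsEssentiallyNormal ((1 - P) * T * (1 - P)) := by
  have hK (Q : E →L[𝕜] E) : IsCompactOperator (Q * selfCommutator T * Q) :=
    (hT.comp_clm Q).clm_comp Q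
  have hP₁ := hK P
  have hP₂ := hK (1 - P)
  rw [hP.mul_selfCommutator_mul hinv, FunLike.coe_sub] at hP₁
  rw [hP.one_sub_mul_selfCommutator_mul hinv, FunLike.coe_add] at hP₂
  calc IsEssentiallyNormal (P * T * P)
      ↔ IsCompactOperator ⇑(P * T * (1 - P) * star (P * T * (1 - P))) := hP₁.iff_of_sub
    _ ↔ IsCompactOperator ⇑(star (P * T * (1 - P)) * (P * T * (1 - P))) :=
      isCompactOperator_comp_adjoint_iff _
    _ ↔ IsEssentiallyNormal ((1 - P) * T * (1 - P)) := hP₂.iff_of_add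

variable {V : F →L[𝕜] E}

theorem adjoint_apply_apply_of_adjoint_comp_self (hV : adjoint V ∘L V = 1) (x : F) :
    adjoint V (V x) = x := by
  simpa using congr($hV x)

theorem selfCommutator_conj_of_adjoint_comp_self (hV : adjoint V ∘L V = 1) (S : F →L[𝕜] F) :
    selfCommutator (V ∘L S ∘L adjoint V) = V ∘L selfCommutator S ∘L adjoint V := by
  ext x
  simp [selfCommutator, star_eq_adjoint, adjoint_comp,
    adjoint_apply_apply_of_adjoint_comp_self hV]

theorem isEssentiallyNormal_conj_iff (hV : adjoint V ∘L V = 1) (S : F →L[𝕜] F) :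
    IsEssentiallyNormal (V ∘L S ∘L adjoint V) ↔ IsEssentiallyNormal S := by
  simp only [IsEssentiallyNormal, selfCommutator_conj_of_adjoint_comp_self hV]
  refine ⟨fun h ↦ ?_, fun h ↦ (h.comp_clm _).clm_comp V⟩
  have hS : ⇑(selfCommutator S) = adjoint V ∘ (V ∘L selfCommutator S ∘L adjoint V) ∘ V := by
    ext x
    simp [adjoint_apply_apply_of_adjoint_comp_self hV]
  exact hS ▸ (h.comp_clm V).clm_comp (adjoint V)

theorem Submodule.starProjection_eq_comp_adjoint (hV : adjoint V ∘L V = 1) {K : Submodule 𝕜 E}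
    [K.HasOrthogonalProjection] (hK : LinearMap.range (V : F →ₗ[𝕜] E) = K) :
    K.starProjection = V ∘L adjoint V := by
  ext x
  refine K.eq_starProjection_of_mem_of_inner_eq_zero (hK ▸ LinearMap.mem_range_self _ _) ?_
  intro w hw
  obtain ⟨z, rfl⟩ : w ∈ LinearMap.range (V : F →ₗ[𝕜] E) := hK ▸ hw
  rw [coe_coe, ← adjoint_inner_left, map_sub, comp_apply,
    adjoint_apply_apply_of_adjoint_comp_self hV, sub_self, inner_zero_left]

theorem one_sub_mul_mul_eq_zero_of_intertwines (hV : adjoint V ∘L V = 1) {S : F →L[𝕜] F}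
    {T : E →L[𝕜] E} (hTS : T ∘L V = V ∘L S) :
    (1 - V ∘L adjoint V) * T * (V ∘L adjoint V) = 0 := by
  have hTS' (x : F) : T (V x) = V (S x) := congr($hTS x)
  ext x
  simp [adjoint_apply_apply_of_adjoint_comp_self hV, hTS']

theorem mul_mul_eq_conj_of_intertwines (hV : adjoint V ∘L V = 1) {S : F →L[𝕜] F}
    {T : E →L[𝕜] E} (hTS : T ∘L V = V ∘L S) :
    V ∘L adjoint V * T * (V ∘L adjoint V) = V ∘L S ∘L adjoint V := by
  have hTS' (x : F) : T (V x) = V (S x) := congr($hTS x)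
  ext x
  simp [adjoint_apply_apply_of_adjoint_comp_self hV, hTS']

end EssentiallyNormal

/-- let `M₁ = H` be an essentially reductive Hilbert module (the
module multiplications `ρ a` are all essentially normal), and consider a short
exact sequence `0 ← M₀ ← M₁ ← M₂ ← 0` where `X₁ : M₂ → M₁` is an isometric
module map with range the submodule `N`, and `M₀ ≅ M₁/N` carries the compressed
action `(1-P) ρ a (1-P)` (where `P` is the projection onto `N`).  Then `M₂` is
essentially reductive iff `M₀` is essentially reductive. -/
theorem submodule_essentially_reductive_iff_quotient
    {ι : Type*} {H M2 : Type*}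
    [NormedAddCommGroup H] [InnerProductSpace ℂ H] [CompleteSpace H]
    [NormedAddCommGroup M2] [InnerProductSpace ℂ M2] [CompleteSpace M2]
    (ρ : ι → H →L[ℂ] H) (ρ2 : ι → M2 →L[ℂ] M2)
    (hess : ∀ a, IsCompactOperator ⇑(adjoint (ρ a) ∘L ρ a - ρ a ∘L adjoint (ρ a)))
    (N : Submodule ℂ H) [CompleteSpace N]
    (X1 : M2 →L[ℂ] H) (hiso : ∀ x, ‖X1 x‖ = ‖x‖)
    (hrange : LinearMap.range (X1 : M2 →ₗ[ℂ] H) = N)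
    (hmod : ∀ a, ρ a ∘L X1 = X1 ∘L ρ2 a)
    (P : H →L[ℂ] H) (hP : P = N.subtypeL ∘L N.orthogonalProjectionOnto) :
    (∀ a, IsCompactOperator
        ⇑(adjoint (ρ2 a) ∘L ρ2 a - ρ2 a ∘L adjoint (ρ2 a))) ↔
    (∀ a, IsCompactOperator
        ⇑((adjoint ((1 - P) ∘L ρ a ∘L (1 - P)) ∘L ((1 - P) ∘L ρ a ∘L (1 - P)) -
          ((1 - P) ∘L ρ a ∘L (1 - P)) ∘L adjoint ((1 - P) ∘L ρ a ∘L (1 - P)) :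
          H →L[ℂ] H))) := by
  have hXX : adjoint X1 ∘L X1 = 1 := (norm_map_iff_adjoint_comp_self X1).mp hiso
  have hPX : P = X1 ∘L adjoint X1 := hP.trans (N.starProjection_eq_comp_adjoint hXX hrange)
  have hPproj : IsStarProjection P := hP ▸ isStarProjection_starProjection
  refine forall_congr' fun a ↦ ?_
  rw [← isEssentiallyNormal_iff, ← isEssentiallyNormal_iff, ← mul_def, ← mul_def, ← mul_assoc]
  have hinv : (1 - P) * ρ a * P = 0 := hPX ▸ one_sub_mul_mul_eq_zero_of_intertwines hXX (hmod a)
  calc IsEssentiallyNormal (ρ2 a) ↔ IsEssentiallyNormal (P * ρ a * P) := by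
        rw [hPX, mul_mul_eq_conj_of_intertwines hXX (hmod a), isEssentiallyNormal_conj_iff hXX]
    _ ↔ IsEssentiallyNormal ((1 - P) * ρ a * (1 - P)) :=
        (isEssentiallyNormal_iff.mpr (hess a)).compress_iff hPproj hinv
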